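/- arXiv:2502.20259 — 2 statements merged into one kernel-verified Lean document; each statement's English description precedes it below -/
import Mathlib

section
/- Let A be a unital C*-algebra regarded as a Hilbert module over itself with inner product ⟨a,b⟩ = a*b. Then for every adjointable operator T on A, the numerical radius equals the norm: w(T) = ‖T‖. -/
open scoped ComplexOrder RightActions

noncomputable section

variable {A : Type*} [CStarAlgebra A] [PartialOrder A] [StarOrderedRing A]

/-- A state on the C*-algebra `A`: a norm-one functional that is positive. -/
def IsState (ρ : A →L[ℂ] ℂ) : Prop :=
  ‖ρ‖ = 1 ∧ ∀ a : A, 0 ≤ ρ (star a * a)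

/-- The numerical radius `w(T)` of an operator on `A`, regarded as a Hilbert module over
itself via `⟪a, b⟫ = a* b`. -/
def numRadius (T : A →L[ℂ] A) : ℝ :=
  sSup {r : ℝ | ∃ b : A, ‖b‖ = 1 ∧ r = ‖(inner A (T b) b : A)‖}

/-!
An adjointable operator `T` on `A` is right multiplication by `T 1`, and right multiplication
by `c` has norm `‖c‖` in a C⋆-algebra. Hence `‖T‖ = ‖T 1‖ = ‖⟪T 1, 1⟫‖ ≤ w(T)`, while
`w(T) ≤ ‖T‖` is Cauchy–Schwarz.
-/

open scoped InnerProductSpace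
open ContinuousLinearMap WithCStarModule

lemma norm_inner_apply_self_le_opNorm (T : A →L[ℂ] A) {b : A} (hb : ‖b‖ = 1) :
    ‖⟪T b, b⟫_A‖ ≤ ‖T‖ :=
  calc ‖⟪T b, b⟫_A‖ ≤ ‖T b‖ * ‖b‖ := CStarModule.norm_inner_le A
    _ ≤ ‖T‖ * ‖b‖ * ‖b‖ := by gcongr; exact T.le_opNorm b
    _ = ‖T‖ := by rw [hb, mul_one, mul_one]

lemma numRadius_le_opNorm (T : A →L[ℂ] A) : numRadius T ≤ ‖T‖ :=
  Real.sSup_le (by rintro r ⟨b, hb, rfl⟩; exact norm_inner_apply_self_le_opNorm T hb)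
    (norm_nonneg T)

lemma numRadius_nonneg (T : A →L[ℂ] A) : 0 ≤ numRadius T :=
  Real.sSup_nonneg (by rintro r ⟨b, -, rfl⟩; exact norm_nonneg _)

lemma norm_inner_apply_self_le_numRadius (T : A →L[ℂ] A) {b : A} (hb : ‖b‖ = 1) :
    ‖⟪T b, b⟫_A‖ ≤ numRadius T :=
  le_csSup ⟨‖T‖, by rintro r ⟨b, hb, rfl⟩; exact norm_inner_apply_self_le_opNorm T hb⟩
    ⟨b, hb, rfl⟩

/-- Testing the adjoint relation against `1` gives `S y = y * star (T 1)`, so `T a` and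
`a * T 1` have the same inner product with every `y`, in particular with their difference. -/
lemma apply_eq_mul_apply_one_of_inner_adjoint {T S : A → A}
    (hTS : ∀ x y : A, ⟪T x, y⟫_A = ⟪x, S y⟫_A) (a : A) : T a = a * T 1 := by
  have hinner : ∀ y : A, y * star (T a) = y * star (a * T 1) := fun y => by
    have ha := hTS a y
    have h1 := hTS 1 y
    simp only [inner_def, star_one, mul_one] at ha h1
    rw [ha, ← h1, star_mul, mul_assoc]
  have hd : (T a - a * T 1) * star (T a - a * T 1) = 0 := by
    rw [star_sub, mul_sub, hinner, sub_self]
  exact sub_eq_zero.mp ((CStarRing.mul_star_self_eq_zero_iff _).mp hd)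

/-- For every adjointable operator `T` on a unital C*-algebra `A` regarded as a Hilbert module
over itself, `w(T) = ‖T‖`. -/
theorem numRadius_eq_norm_of_unital (T Tadj : A →L[ℂ] A)
    (hT : ∀ x y : A, (inner A (T x) y : A) = inner A x (Tadj y)) :
    numRadius T = ‖T‖ := by
  have hT_mul : T = (mul ℂ A).flip (T 1) :=
    ContinuousLinearMap.ext (apply_eq_mul_apply_one_of_inner_adjoint hT)
  refine le_antisymm (numRadius_le_opNorm T) ?_
  rcases subsingleton_or_nontrivial A with hA | hA
  · rw [Subsingleton.elim T 0, norm_zero]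
    exact numRadius_nonneg 0
  · calc ‖T‖ = ‖T 1‖ := by
          conv_lhs => rw [hT_mul]
          exact opNorm_mul_flip_apply ℂ (T 1)
      _ = ‖⟪T 1, 1⟫_A‖ := by rw [inner_def, one_mul, norm_star]
      _ ≤ numRadius T := norm_inner_apply_self_le_numRadius T norm_one
end
end

section
/- Let A be a unital C*-algebra regarded as a Hilbert module over itself, and a ∈ A with left-multiplication operator L_a. Then sup_{θ ∈ [0,2π]} ‖Re(e^{iθ} L_a)‖ ≤ sup{ |ρ(a)| : ρ a state on A }. -/
open scoped ComplexOrder RightActions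

noncomputable section

variable {A : Type*} [CStarAlgebra A] [PartialOrder A] [StarOrderedRing A]

set_option linter.unusedSectionVars false

section Aux

variable [Nontrivial A]

open Complex in
lemma aux_im_eq_zero (ρ : A →L[ℂ] ℂ) (hρn : ‖ρ‖ ≤ 1) (hρ1 : ρ 1 = 1)
    {y : A} (hy : IsSelfAdjoint y) : (ρ y).im = 0 := by
  have key : ∀ r : ℝ, (ρ y).re ^ 2 + ((ρ y).im + r) ^ 2 ≤ ‖y‖ ^ 2 + r ^ 2 := by
    intro r
    set c : ℂ := (r : ℂ) * Complex.I with hc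
    have hstar : star (y + c • (1 : A)) = y - c • 1 := by
      simp [star_smul, hy.star_eq, hc, Complex.conj_I, mul_neg, sub_eq_add_neg, neg_smul]
    have hprod : (y - c • (1 : A)) * (y + c • 1) = y * y + ((r : ℂ)^2) • 1 := by
      have h1 : (c • (1:A)) * y = y * (c • (1:A)) := by
        simp [smul_mul_assoc, mul_smul_comm]
      have h2 : (c • (1:A)) * (c • (1:A)) = (c * c) • (1:A) := by
        simp [smul_mul_assoc, mul_smul_comm, smul_smul]
      have h3 : c * c = -((r:ℂ)^2) := by
        rw [hc]; ring_nf; rw [Complex.I_sq]; ring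
      rw [sub_mul, mul_add, mul_add, h1, h2, h3, neg_smul]
      abel
    have hsmul : ‖((r:ℂ)^2) • (1:A)‖ = r ^ 2 := by
      rw [norm_smul, norm_one, mul_one, ← Complex.ofReal_pow,
        Complex.norm_real, Real.norm_eq_abs, _root_.abs_of_nonneg (sq_nonneg r)]
    have hnorm : ‖y + c • (1 : A)‖ ^ 2 ≤ ‖y‖ ^ 2 + r ^ 2 := by
      have hmn := CStarRing.norm_star_mul_self (x := y + c • (1 : A))
      rw [hstar, hprod] at hmn
      calc ‖y + c • (1 : A)‖ ^ 2 = ‖y + c • (1:A)‖ * ‖y + c • (1:A)‖ := sq ‖_‖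
        _ = ‖y * y + ((r : ℂ)^2) • (1:A)‖ := hmn.symm
        _ ≤ ‖y * y‖ + ‖((r : ℂ)^2) • (1:A)‖ := norm_add_le _ _
        _ ≤ ‖y‖ * ‖y‖ + r ^ 2 := by rw [hsmul]; gcongr; exact norm_mul_le _ _
        _ = ‖y‖ ^ 2 + r ^ 2 := by ring
    have happ : ρ (y + c • (1 : A)) = ρ y + c := by
      simp [map_add, map_smul, hρ1, smul_eq_mul]
    have hle : ‖ρ (y + c • (1:A))‖ ≤ ‖y + c • (1:A)‖ := by
      calc ‖ρ (y + c • (1:A))‖ ≤ ‖ρ‖ * ‖y + c • (1:A)‖ := ρ.le_opNorm _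
        _ ≤ 1 * ‖y + c • (1:A)‖ := by gcongr
        _ = _ := one_mul _
    have hsq : ‖ρ y + c‖ ^ 2 ≤ ‖y + c • (1:A)‖ ^ 2 := by
      rw [← happ]; gcongr
    refine le_trans (le_of_eq ?_) (hsq.trans hnorm)
    rw [Complex.sq_norm, Complex.normSq_apply]
    simp [hc]
    ring
  by_contra ht
  set t := (ρ y).im with htdef
  have key2 : ∀ r : ℝ, (ρ y).re ^ 2 + t ^ 2 + 2 * t * r ≤ ‖y‖ ^ 2 := by
    intro r; have := key r; nlinarith [this]
  have h := key2 ((‖y‖ ^ 2 - (ρ y).re ^ 2) / (2 * t))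
  have h2t : (2 * t) ≠ 0 := by simpa using ht
  have hfield : 2 * t * ((‖y‖ ^ 2 - (ρ y).re ^ 2) / (2 * t)) = ‖y‖ ^ 2 - (ρ y).re ^ 2 := by
    field_simp
  rw [hfield] at h
  have : t ^ 2 ≤ 0 := by linarith
  have := sq_nonneg t
  have ht2 : t ^ 2 = 0 := le_antisymm ‹t ^ 2 ≤ 0› (sq_nonneg t)
  exact ht (pow_eq_zero_iff (by norm_num) |>.mp ht2)

lemma aux_pos (ρ : A →L[ℂ] ℂ) (hρn : ‖ρ‖ ≤ 1) (hρ1 : ρ 1 = 1)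
    (x : A) : 0 ≤ ρ (star x * x) := by
  set z : A := star x * x with hz
  have hznn : 0 ≤ z := star_mul_self_nonneg x
  have hzsa : IsSelfAdjoint z := IsSelfAdjoint.star_mul_self x
  have him : (ρ z).im = 0 := aux_im_eq_zero ρ hρn hρ1 hzsa
  have hle1 : z ≤ algebraMap ℝ A ‖z‖ := hzsa.le_algebraMap_norm_self
  have hge0 : (0 : A) ≤ algebraMap ℝ A ‖z‖ - z := sub_nonneg.mpr hle1
  have hle2 : algebraMap ℝ A ‖z‖ - z ≤ algebraMap ℝ A ‖z‖ := by
    simpa using sub_le_self (algebraMap ℝ A ‖z‖) hznn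
  have hnorm : ‖algebraMap ℝ A ‖z‖ - z‖ ≤ ‖z‖ :=
    (CStarAlgebra.norm_le_iff_le_algebraMap _ (norm_nonneg z) hge0).mpr hle2
  have happ : ρ (algebraMap ℝ A ‖z‖ - z) = (‖z‖ : ℂ) - ρ z := by
    have : algebraMap ℝ A ‖z‖ = (‖z‖ : ℂ) • (1 : A) := by
      rw [Algebra.algebraMap_eq_smul_one]
      norm_num
    rw [map_sub, this, map_smul, hρ1, smul_eq_mul, mul_one]
  have hbound : ‖(‖z‖ : ℂ) - ρ z‖ ≤ ‖z‖ := by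
    rw [← happ]
    calc ‖ρ _‖ ≤ ‖ρ‖ * ‖algebraMap ℝ A ‖z‖ - z‖ := ρ.le_opNorm _
      _ ≤ 1 * ‖z‖ := by gcongr
      _ = ‖z‖ := one_mul _
  have hre : 0 ≤ (ρ z).re := by
    have hsq : ‖(‖z‖ : ℂ) - ρ z‖ ^ 2 = (‖z‖ - (ρ z).re) ^ 2 := by
      rw [Complex.sq_norm, Complex.normSq_apply]
      simp [him]
      ring
    have h2 : (‖z‖ - (ρ z).re) ^ 2 ≤ ‖z‖ ^ 2 := by
      rw [← hsq]
      have := norm_nonneg ((‖z‖ : ℂ) - ρ z)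
      nlinarith [hbound]
    nlinarith [norm_nonneg z]
  rw [Complex.le_def]
  constructor
  · simpa using hre
  · simpa using him.symm

lemma aux_star (ρ : A →L[ℂ] ℂ) (hρn : ‖ρ‖ ≤ 1) (hρ1 : ρ 1 = 1)
    (x : A) : ρ (star x) = (starRingEnd ℂ) (ρ x) := by
  have h1 : IsSelfAdjoint (x + star x) := by
    rw [IsSelfAdjoint, star_add, star_star, add_comm]
  have h2 : IsSelfAdjoint (Complex.I • (x - star x)) := by
    rw [IsSelfAdjoint, star_smul, star_sub, star_star, Complex.star_def, Complex.conj_I,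
      neg_smul, ← smul_neg, neg_sub]
  have e1 : (ρ x + ρ (star x)).im = 0 := by
    have := aux_im_eq_zero ρ hρn hρ1 h1
    rwa [map_add] at this
  have e2 : (Complex.I * (ρ x - ρ (star x))).im = 0 := by
    have := aux_im_eq_zero ρ hρn hρ1 h2
    rwa [map_smul, smul_eq_mul, map_sub] at this
  rw [Complex.ext_iff]
  constructor
  · have := e2
    simp [Complex.mul_im, Complex.sub_re] at this
    simp [Complex.conj_re]
    linarith
  · have := e1
    simp [Complex.add_im] at this
    simp [Complex.conj_im]
    linarith

lemma aux_isState (ρ : A →L[ℂ] ℂ) (hρn : ‖ρ‖ ≤ 1) (hρ1 : ρ 1 = 1) :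
    ‖ρ‖ = 1 := by
  refine le_antisymm hρn ?_
  have := ρ.le_opNorm 1
  rw [hρ1, norm_one] at this
  simpa using this

end Aux

section Aux2

variable [Nontrivial A]

lemma aux_extend {n : ℕ} (v : Fin n → A) (hv : LinearIndependent ℂ v) (w : Fin n → ℂ)
    (hbound : ∀ c : Fin n → ℂ, ‖∑ i, c i * w i‖ ≤ ‖∑ i, c i • v i‖) :
    ∃ ρ : A →L[ℂ] ℂ, ‖ρ‖ ≤ 1 ∧ ∀ i, ρ (v i) = w i := by
  set p : Submodule ℂ A := Submodule.span ℂ (Set.range v) with hp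
  haveI : FiniteDimensional ℂ p := FiniteDimensional.span_of_finite ℂ (Set.finite_range v)
  set B : Module.Basis (Fin n) ℂ p := Module.Basis.span hv with hB
  set f₀ : p →ₗ[ℂ] ℂ := B.constr ℂ w with hf₀
  set f : p →L[ℂ] ℂ := LinearMap.toContinuousLinearMap f₀ with hf
  have hfapply : ∀ x : p, f x = ∑ i, B.repr x i * w i := by
    intro x
    conv_lhs => rw [← B.sum_repr x]
    simp only [hf, hf₀, LinearMap.coe_toContinuousLinearMap', map_sum, map_smul]
    congr 1
    ext i
    rw [Module.Basis.constr_basis]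
    simp [smul_eq_mul]
  have hcoe : ∀ x : p, (x : A) = ∑ i, B.repr x i • v i := by
    intro x
    conv_lhs => rw [← B.sum_repr x]
    push_cast
    congr 1
    ext i
    rw [Module.Basis.span_apply hv i]
  have hfle : ∀ x : p, ‖f x‖ ≤ ‖x‖ := by
    intro x
    rw [hfapply x]
    calc ‖∑ i, B.repr x i * w i‖ ≤ ‖∑ i, B.repr x i • v i‖ := hbound _
      _ = ‖(x : A)‖ := by rw [← hcoe x]
      _ = ‖x‖ := rfl
  have hfnorm : ‖f‖ ≤ 1 := f.opNorm_le_bound zero_le_one (by simpa using hfle)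
  obtain ⟨g, hg, hgnorm⟩ := exists_extension_norm_eq p f
  refine ⟨g, hgnorm ▸ hfnorm, fun i ↦ ?_⟩
  have hvi : v i ∈ p := Submodule.subset_span ⟨i, rfl⟩
  have : g (v i) = f ⟨v i, hvi⟩ := hg ⟨v i, hvi⟩
  rw [this]
  have hbi : (⟨v i, hvi⟩ : p) = B i := by
    ext
    exact congrArg Subtype.val (Module.Basis.span_apply hv i).symm
  rw [hbi]
  show f₀ (B i) = w i
  rw [hf₀, Module.Basis.constr_basis]

lemma aux_exists_state (b : A) (hb : IsSelfAdjoint b) :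
    ∃ ρ : A →L[ℂ] ℂ, ‖ρ‖ ≤ 1 ∧ ρ 1 = 1 ∧ ‖ρ b‖ = ‖b‖ := by
  obtain ⟨lam, hlam, habs⟩ : ∃ lam : ℝ, lam ∈ spectrum ℝ b ∧ |lam| = ‖b‖ := by
    rcases CStarAlgebra.norm_or_neg_norm_mem_spectrum hb with h | h
    · exact ⟨‖b‖, h, abs_of_nonneg (norm_nonneg b)⟩
    · exact ⟨-‖b‖, h, by simp [abs_of_nonneg (norm_nonneg b)]⟩
  have hlamc : (lam : ℂ) ∈ spectrum ℂ b := spectrum.algebraMap_mem ℂ hlam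
  by_cases hsc : ∃ μ : ℂ, b = μ • (1 : A)
  · obtain ⟨μ, rfl⟩ := hsc
    have hμ : ‖μ • (1 : A)‖ = ‖μ‖ := by
      rw [norm_smul, norm_one, mul_one]
    have hind : LinearIndependent ℂ ![(1 : A)] := by
      refine linearIndependent_unique_iff.mpr ?_
      simp
    obtain ⟨ρ, hρn, hρv⟩ := aux_extend ![(1 : A)] hind ![1] (fun c => by
      simp [Fin.sum_univ_one, norm_smul])
    refine ⟨ρ, hρn, by simpa using hρv 0, ?_⟩
    rw [map_smul, smul_eq_mul]
    have h1 : ρ 1 = 1 := by simpa using hρv 0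
    rw [h1, mul_one, hμ]
  · have hind : LinearIndependent ℂ ![(1 : A), b] := by
      rw [LinearIndependent.pair_iff]
      intro s t hst
      by_cases ht : t = 0
      · subst ht
        simp only [zero_smul, add_zero, smul_eq_zero] at hst
        rcases hst with h | h
        · exact ⟨h, rfl⟩
        · exact absurd h one_ne_zero
      · exfalso
        apply hsc
        refine ⟨-s / t, ?_⟩
        have : t • b = -(s • (1 : A)) := eq_neg_of_add_eq_zero_right hst
        have hb' : b = t⁻¹ • -(s • (1 : A)) := by
          rw [← this, smul_smul, inv_mul_cancel₀ ht, one_smul]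
        rw [hb', smul_neg, smul_smul]
        rw [neg_div, neg_smul]
        ring_nf
    have hbound : ∀ c : Fin 2 → ℂ, ‖∑ i, c i * ![
        (1 : ℂ), (lam : ℂ)] i‖ ≤ ‖∑ i, c i • ![(1 : A), b] i‖ := by
      intro c
      rw [Fin.sum_univ_two, Fin.sum_univ_two]
      simp only [Matrix.cons_val_zero, Matrix.cons_val_one, Matrix.head_cons, mul_one]
      by_cases hc1 : c 1 = 0
      · simp [hc1, norm_smul]
      · have hmem : c 0 + c 1 * lam ∈ spectrum ℂ (c 0 • (1 : A) + c 1 • b) := by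
          set u : ℂˣ := Units.mk0 (c 1) hc1 with hu
          have h1 : u • (lam : ℂ) ∈ spectrum ℂ (u • b) :=
            (spectrum.smul_mem_smul_iff).mpr hlamc
          have h2 : (u • (lam : ℂ)) + c 0 ∈ spectrum ℂ (algebraMap ℂ A (c 0) + u • b) :=
            (spectrum.add_mem_add_iff).mpr h1
          have hus : (u • (lam : ℂ)) = c 1 * lam := by
            rw [Units.smul_def, smul_eq_mul]; rfl
          have hub : u • b = c 1 • b := by
            rw [Units.smul_def]; rfl
          rw [hus, hub, Algebra.algebraMap_eq_smul_one] at h2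
          rwa [add_comm (c 1 * (lam : ℂ)) (c 0)] at h2
        have := spectrum.norm_le_norm_of_mem hmem
        simpa using this
    obtain ⟨ρ, hρn, hρv⟩ := aux_extend ![(1 : A), b] hind ![1, (lam : ℂ)] hbound
    have h1 : ρ 1 = 1 := by simpa using hρv 0
    have h2 : ρ b = (lam : ℂ) := by simpa using hρv 1
    exact ⟨ρ, hρn, h1, by rw [h2, Complex.norm_real, Real.norm_eq_abs, habs]⟩

end Aux2

/-- `sup_{θ ∈ [0,2π]} ‖Re(e^{iθ} L_a)‖ ≤ sup { |ρ(a)| : ρ a state on A }`, where `L_a` is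
left multiplication by `a` and `Re(S) = (S + S*)/2` (the adjoint of `L_a` being `L_{a*}`). -/
theorem sup_norm_re_mulLeft_le_sup_state (a : A) :
    sSup {r : ℝ | ∃ θ ∈ Set.Icc (0 : ℝ) (2 * Real.pi),
        r = ‖(1 / 2 : ℂ) • (Complex.exp (θ * Complex.I) • (ContinuousLinearMap.mul ℂ A a) +
              Complex.exp (-(θ * Complex.I)) • (ContinuousLinearMap.mul ℂ A (star a)))‖} ≤
      sSup {r : ℝ | ∃ ρ : A →L[ℂ] ℂ, IsState ρ ∧ r = ‖ρ a‖} := by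
  set S₂ : Set ℝ := {r : ℝ | ∃ ρ : A →L[ℂ] ℂ, IsState ρ ∧ r = ‖ρ a‖} with hS₂
  have hS₂nonneg : 0 ≤ sSup S₂ :=
    Real.sSup_nonneg (by rintro r ⟨ρ, _, rfl⟩; positivity)
  have hS₂bdd : BddAbove S₂ := by
    refine ⟨‖a‖, ?_⟩
    rintro r ⟨ρ, hρ, rfl⟩
    calc ‖ρ a‖ = ‖ρ a‖ := rfl
      _ ≤ ‖ρ‖ * ‖a‖ := ρ.le_opNorm a
      _ = ‖a‖ := by rw [hρ.1, one_mul]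
  refine Real.sSup_le ?_ hS₂nonneg
  rintro r ⟨θ, hθ, rfl⟩
  rcases subsingleton_or_nontrivial A with hA | hA
  · have : (1 / 2 : ℂ) • (Complex.exp (θ * Complex.I) • (ContinuousLinearMap.mul ℂ A a) +
        Complex.exp (-(θ * Complex.I)) • (ContinuousLinearMap.mul ℂ A (star a))) = 0 :=
      Subsingleton.elim _ _
    rw [this, norm_zero]
    exact hS₂nonneg
  · set c : ℂ := Complex.exp (θ * Complex.I) with hc
    set c' : ℂ := Complex.exp (-(θ * Complex.I)) with hc'
    set b : A := (1 / 2 : ℂ) • (c • a + c' • star a) with hb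
    have hmul : (1 / 2 : ℂ) • (c • (ContinuousLinearMap.mul ℂ A a) +
        c' • (ContinuousLinearMap.mul ℂ A (star a))) = ContinuousLinearMap.mul ℂ A b := by
      rw [hb, map_smul, map_add, map_smul, map_smul]
    have hnorm : ‖(1 / 2 : ℂ) • (c • (ContinuousLinearMap.mul ℂ A a) +
        c' • (ContinuousLinearMap.mul ℂ A (star a)))‖ = ‖b‖ := by
      rw [hmul, ContinuousLinearMap.opNorm_mul_apply]
    have hcc' : (starRingEnd ℂ) c = c' := by
      rw [hc, hc', ← Complex.exp_conj]
      congr 1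
      simp [Complex.ext_iff]
    have hc'c : (starRingEnd ℂ) c' = c := by
      rw [← hcc', Complex.conj_conj]
    have hbsa : IsSelfAdjoint b := by
      have h1 : star c = c' := hcc'
      have h2 : star c' = c := hc'c
      have h3 : star (1/2 : ℂ) = (1/2 : ℂ) := by
        simp [Complex.star_def, Complex.ext_iff]
      rw [IsSelfAdjoint, hb, star_smul, star_add, star_smul, star_smul, star_star,
        h1, h2, h3, add_comm]
    obtain ⟨ρ, hρn, hρ1, hρb⟩ := aux_exists_state b hbsa
    have hstate : IsState ρ := ⟨aux_isState ρ hρn hρ1, aux_pos ρ hρn hρ1⟩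
    have habsc : ‖c‖ = 1 := by
      rw [hc]; exact Complex.norm_exp_ofReal_mul_I θ
    have hρbval : ρ b = (((c * ρ a).re : ℝ) : ℂ) := by
      rw [hb, map_smul, map_add, map_smul, map_smul, aux_star ρ hρn hρ1 a,
        smul_eq_mul, smul_eq_mul, smul_eq_mul, ← hcc', ← map_mul, Complex.add_conj]
      push_cast
      ring
    have hkey : ‖b‖ ≤ ‖ρ a‖ := by
      rw [← hρb, hρbval, Complex.norm_real, Real.norm_eq_abs]
      calc |(c * ρ a).re| ≤ ‖c * ρ a‖ := Complex.abs_re_le_norm _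
        _ = ‖c‖ * ‖ρ a‖ := norm_mul _ _
        _ = ‖ρ a‖ := by rw [habsc, one_mul]
    calc ‖(1 / 2 : ℂ) • (c • (ContinuousLinearMap.mul ℂ A a) +
        c' • (ContinuousLinearMap.mul ℂ A (star a)))‖ = ‖b‖ := hnorm
      _ ≤ ‖ρ a‖ := hkey
      _ ≤ sSup S₂ := le_csSup hS₂bdd ⟨ρ, hstate, rfl⟩
end
end
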